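/- arXiv:1801.02932 — 2 statements merged into one kernel-verified Lean document; each statement's English description precedes it below -/
import Mathlib

section
/- For every family of integers t = (t_{i,j,k})_{1 ≤ i < j < k ≤ n}, the group G(t) is nilpotent. -/
/-
Let `H k` be the subgroup generated by the `a i` with `i ≥ k`, so `H 0 = G` and `H n = 1`.
The relation for `i < j` says that `a j` and `a i` commute up to an element of `H (j + 1)`.
By downward induction on `k`, `H (k + 1)` is normal and, modulo it, every generator of `H k`
commutes with every generator of `G`; hence `⁅H k, G⁆ ≤ H (k + 1)` and `H k` is normal too.
So the `k`-th term of the lower central series lies in `H k`, and vanishes for `k = n`.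
-/

namespace HallPoly

/-- The ordered product `g_1^{e_1} ⋯ g_n^{e_n}` taken in increasing order of indices. -/
def prodPow {Γ : Type*} [Group Γ] (n : ℕ) (g : Fin n → Γ) (e : Fin n → ℤ) : Γ :=
  ((List.finRange n).map fun k => g k ^ e k).prod

/-- The relators of the presented group `G(t)`:
`(a_i · a_j · a_{j+1}^{t_{i,j,j+1}} ⋯ a_n^{t_{i,j,n}})⁻¹ · (a_j · a_i)` for `1 ≤ i < j ≤ n`. -/
def rels (n : ℕ) (t : Fin n → Fin n → Fin n → ℤ) : Set (FreeGroup (Fin n)) :=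
  { r | ∃ i j : Fin n, i < j ∧
      r = (FreeGroup.of i * FreeGroup.of j *
            prodPow n FreeGroup.of (fun k => if j < k then t i j k else 0))⁻¹ *
          (FreeGroup.of j * FreeGroup.of i) }

/-- The presented group `G(t)` with generators `a_1, …, a_n` and relations
`a_j·a_i = a_i·a_j·a_{j+1}^{t_{i,j,j+1}} ⋯ a_n^{t_{i,j,n}}` for `1 ≤ i < j ≤ n`. -/
abbrev G (n : ℕ) (t : Fin n → Fin n → Fin n → ℤ) : Type := PresentedGroup (rels n t)

/-- The generators `a_1, …, a_n` of `G(t)`. -/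
def a (n : ℕ) (t : Fin n → Fin n → Fin n → ℤ) (i : Fin n) : G n t :=
  PresentedGroup.of i

/-- The normal form map `N_t : ℤⁿ → G(t)`, `x ↦ a_1^{x_1} ⋯ a_n^{x_n}`. -/
def N (n : ℕ) (t : Fin n → Fin n → Fin n → ℤ) (x : Fin n → ℤ) : G n t :=
  prodPow n (a n t) x

end HallPoly

section Triangular

open scoped commutatorElement

variable {Γ : Type*} [Group Γ]

theorem Subgroup.commutator_closure_le {s t : Set Γ} {N : Subgroup Γ} [N.Normal]
    (h : ∀ x ∈ s, ∀ y ∈ t, ⁅x, y⁆ ∈ N) : ⁅Subgroup.closure s, Subgroup.closure t⁆ ≤ N := by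
  rw [← QuotientGroup.ker_mk' N, ← MonoidHom.comap_bot, ← Subgroup.map_le_iff_le_comap,
    le_bot_iff, Subgroup.map_commutator, MonoidHom.map_closure, MonoidHom.map_closure,
    Subgroup.commutator_eq_bot_iff_le_centralizer, Subgroup.centralizer_closure,
    Subgroup.closure_le]
  rintro _ ⟨x, hx, rfl⟩ _ ⟨y, hy, rfl⟩
  rw [← commutatorElement_eq_one_iff_mul_comm, ← map_commutatorElement,
    QuotientGroup.mk'_apply, QuotientGroup.eq_one_iff, ← commutatorElement_inv]
  exact inv_mem (h x hx y hy)

theorem commutatorElement_mem_iff {N : Subgroup Γ} [N.Normal] {x y : Γ} :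
    ⁅x, y⁆ ∈ N ↔ (y * x)⁻¹ * (x * y) ∈ N := by
  rw [commutatorElement_def, mul_assoc (x * y), ← mul_inv_rev, Subgroup.Normal.mem_comm_iff ‹_›]

variable {n : ℕ}

def tailClosure (g : Fin n → Γ) (k : ℕ) : Subgroup Γ :=
  Subgroup.closure (g '' {i | k ≤ (i : ℕ)})

def HasTriangularRelations (g : Fin n → Γ) : Prop :=
  ∀ i j : Fin n, i < j → (g i * g j)⁻¹ * (g j * g i) ∈ tailClosure g (j + 1)

variable {g : Fin n → Γ}

theorem tailClosure_antitone : Antitone (tailClosure g) :=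
  fun _ _ hkl => Subgroup.closure_mono (Set.image_mono fun _ hi => hkl.trans hi)

theorem tailClosure_zero : tailClosure g 0 = Subgroup.closure (Set.range g) := by
  simp [tailClosure]

theorem tailClosure_eq_bot {k : ℕ} (hk : n ≤ k) : tailClosure g k = ⊥ := by
  rw [tailClosure, Subgroup.closure_eq_bot_iff]
  rintro _ ⟨i, hi, rfl⟩
  exact absurd (i.isLt.trans_le hk) (not_lt.2 hi)

theorem commutatorElement_mem_tailClosure (hg : HasTriangularRelations g) {k : ℕ}
    [(tailClosure g (k + 1)).Normal] {i : Fin n} (hi : k ≤ (i : ℕ)) (m : Fin n) :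
    ⁅g i, g m⁆ ∈ tailClosure g (k + 1) := by
  rcases lt_trichotomy m i with hmi | rfl | him
  · exact commutatorElement_mem_iff.2 (tailClosure_antitone (by omega) (hg m i hmi))
  · rw [commutatorElement_self]
    exact one_mem _
  · rw [← commutatorElement_inv]
    exact inv_mem (commutatorElement_mem_iff.2
      (tailClosure_antitone (by omega) (hg i m him)))

theorem commutator_tailClosure_top_le (hgen : Subgroup.closure (Set.range g) = ⊤)
    (hg : HasTriangularRelations g) (k : ℕ) [(tailClosure g (k + 1)).Normal] :
    ⁅tailClosure g k, ⊤⁆ ≤ tailClosure g (k + 1) := by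
  rw [← hgen]
  refine Subgroup.commutator_closure_le ?_
  rintro _ ⟨i, hi, rfl⟩ _ ⟨m, rfl⟩
  exact commutatorElement_mem_tailClosure hg hi m

theorem tailClosure_normal (hgen : Subgroup.closure (Set.range g) = ⊤)
    (hg : HasTriangularRelations g) (k : ℕ) : (tailClosure g k).Normal := by
  obtain hk | hk := le_or_gt n k
  · rw [tailClosure_eq_bot hk]
    infer_instance
  · have := tailClosure_normal hgen hg (k + 1)
    exact Subgroup.commutator_top_right_le_iff.1
      ((commutator_tailClosure_top_le hgen hg k).trans (tailClosure_antitone k.le_succ))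
termination_by n - k

theorem lowerCentralSeries_le_tailClosure (hgen : Subgroup.closure (Set.range g) = ⊤)
    (hg : HasTriangularRelations g) (k : ℕ) :
    (⊤ : Subgroup Γ).lowerCentralSeries k ≤ tailClosure g k := by
  induction k with
  | zero => rw [tailClosure_zero, hgen]; rfl
  | succ k ih =>
    have := tailClosure_normal hgen hg (k + 1)
    exact (Subgroup.commutator_mono ih le_rfl).trans (commutator_tailClosure_top_le hgen hg k)

theorem isNilpotent_of_hasTriangularRelations (hgen : Subgroup.closure (Set.range g) = ⊤)
    (hg : HasTriangularRelations g) : Group.IsNilpotent Γ :=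
  Subgroup.nilpotent_iff_lowerCentralSeries.2 ⟨n, le_bot_iff.1 <|
    (lowerCentralSeries_le_tailClosure hgen hg n).trans (tailClosure_eq_bot le_rfl).le⟩

end Triangular

namespace HallPoly

theorem map_prodPow {Γ Δ : Type*} [Group Γ] [Group Δ] (f : Γ →* Δ) (n : ℕ)
    (g : Fin n → Γ) (e : Fin n → ℤ) : f (prodPow n g e) = prodPow n (fun i => f (g i)) e := by
  simp only [prodPow, ← List.prod_hom _ f, List.map_map, Function.comp_def, map_zpow]

theorem prodPow_mem_tailClosure {Γ : Type*} [Group Γ] {n : ℕ} (g : Fin n → Γ) (j : Fin n)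
    (e : Fin n → ℤ) (he : ∀ k, ¬ j < k → e k = 0) : prodPow n g e ∈ tailClosure g (j + 1) := by
  refine Subgroup.list_prod_mem _ fun x hx => ?_
  obtain ⟨k, -, rfl⟩ := List.mem_map.1 hx
  by_cases hjk : j < k
  · exact zpow_mem (Subgroup.subset_closure (Set.mem_image_of_mem g hjk)) _
  · rw [he k hjk, zpow_zero]
    exact one_mem _

variable {n : ℕ} {t : Fin n → Fin n → Fin n → ℤ}

theorem inv_mul_swap_eq_prodPow (i j : Fin n) (hij : i < j) :
    (a n t i * a n t j)⁻¹ * (a n t j * a n t i) =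
      prodPow n (a n t) (fun k => if j < k then t i j k else 0) := by
  have h := PresentedGroup.mk_eq_mk_of_inv_mul_mem (rels := rels n t) ⟨i, j, hij, rfl⟩
  rw [map_mul, map_mul, map_mul, map_prodPow] at h
  change a n t i * a n t j * prodPow n (a n t) _ = a n t j * a n t i at h
  rw [← h, inv_mul_cancel_left]

theorem hasTriangularRelations_a : HasTriangularRelations (a n t) := fun i j hij =>
  inv_mul_swap_eq_prodPow i j hij ▸ prodPow_mem_tailClosure _ j _ fun _ hk => if_neg hk

/-- For every family of integers `t = (t_{i,j,k})`, the group `G(t)` is nilpotent. -/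
theorem G_isNilpotent (n : ℕ) (t : Fin n → Fin n → Fin n → ℤ) :
    Group.IsNilpotent (G n t) :=
  isNilpotent_of_hasTriangularRelations (PresentedGroup.closure_range_of _) hasTriangularRelations_a

end HallPoly
end

section
/- Let n ≥ 1 and let t = (t_{i,j,k})_{1 ≤ i < j < k ≤ n} be a family of integers such that the normal form map N_t : ℤ^n → G(t) is bijective. Let t_u = (t_{i,j,k})_{2 ≤ i < j < k ≤ n} be the subfamily of entries with all indices different from 1. Then the normal form map N_{t_u} : ℤ^{n−1} → G(t_u) is also bijective; i.e., if t is consistent then t_u is consistent. -/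
/-!
The assignment `a_i ↦ a_{i+1}` respects the relations of `G(t_u)`, so it defines a homomorphism
`G(t_u) → G(t)` sending `N_{t_u}(x)` to `N_t(0, x)`; injectivity of `N_t` therefore passes to
`N_{t_u}`. Surjectivity of the normal form map holds for every `t`: the relations say that
conjugating `a_j` by `a_1` only multiplies it by a word in `a_{j+1}, …, a_n`, so `a_1` normalises
`⟨a_2, …, a_n⟩`, whence `⟨a_1, …, a_n⟩ = ⟨a_1⟩ ⟨a_2, …, a_n⟩`, and induction on `n` collects
every element into the form `a_1^{x_1} ⋯ a_n^{x_n}`.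
-/

namespace HallPoly

open Subgroup Set

section prodPow

variable {Γ Γ' : Type*} [Group Γ] [Group Γ'] {n : ℕ}

lemma map_prodPow_s13 (φ : Γ →* Γ') (g : Fin n → Γ) (e : Fin n → ℤ) :
    φ (prodPow n g e) = prodPow n (φ ∘ g) e := by
  simp [prodPow, map_list_prod, Function.comp_def]

lemma prodPow_succ (g : Fin (n + 1) → Γ) (e : Fin (n + 1) → ℤ) :
    prodPow (n + 1) g e = g 0 ^ e 0 * prodPow n (Fin.tail g) (Fin.tail e) := by
  simp [prodPow, List.finRange_succ, Function.comp_def, Fin.tail]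

lemma prodPow_mem_closure (g : Fin n → Γ) {e : Fin n → ℤ} {s : Set (Fin n)}
    (he : ∀ i, e i ≠ 0 → i ∈ s) : prodPow n g e ∈ closure (g '' s) := by
  refine list_prod_mem fun x hx => ?_
  obtain ⟨i, -, rfl⟩ := List.mem_map.1 hx
  by_cases hi : e i = 0
  · rw [hi, zpow_zero]
    exact one_mem _
  · exact zpow_mem (subset_closure (mem_image_of_mem g (he i hi))) _

end prodPow

section Collection

variable {Γ : Type*} [Group Γ]

lemma image_Ioi_succ_eq_tail {α : Type*} {n : ℕ} (g : Fin (n + 1) → α) (j : Fin n) :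
    g '' Ioi j.succ = Fin.tail g '' Ioi j := by
  rw [← Fin.image_succ_Ioi, image_image]
  rfl

lemma image_Ioi_zero_subset_range_tail {α : Type*} {n : ℕ} (g : Fin (n + 1) → α) :
    g '' Ioi 0 ⊆ range (Fin.tail g) := by
  rintro _ ⟨i, hi, rfl⟩
  obtain ⟨j, rfl⟩ := Fin.exists_succ_eq.2 (ne_of_gt hi)
  exact ⟨j, rfl⟩

lemma mem_normalizer_closure_of_conj_mem {s : Set Γ} {b : Γ}
    (h₁ : ∀ x ∈ s, b * x * b⁻¹ ∈ closure s) (h₂ : ∀ x ∈ s, b⁻¹ * x * b ∈ closure s) :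
    b ∈ normalizer (closure s : Set Γ) := by
  have conj_mem : ∀ c : Γ, (∀ x ∈ s, c * x * c⁻¹ ∈ closure s) →
      ∀ y ∈ closure s, c * y * c⁻¹ ∈ closure s := fun c hc y hy =>
    (closure_le (K := (closure s).comap (MulAut.conj c).toMonoidHom)).2 hc hy
  refine mem_normalizer_iff.2 fun y => ⟨conj_mem b h₁ y, fun hy => ?_⟩
  simpa [mul_assoc] using conj_mem b⁻¹ (by simpa using h₂) _ hy

lemma mem_normalizer_closure_insert {a b w : Γ} {s : Set Γ}
    (hb : b ∈ normalizer (closure s : Set Γ)) (hw : w ∈ closure s) (hab : a * b = b * a * w) :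
    b ∈ normalizer (closure (insert a s) : Set Γ) := by
  have hle : closure s ≤ closure (insert a s) := closure_mono (subset_insert a s)
  have ha : a ∈ closure (insert a s) := subset_closure (mem_insert a s)
  refine mem_normalizer_closure_of_conj_mem (fun x hx => ?_) (fun x hx => ?_)
  · rcases hx with rfl | hx
    · have hba : b * x * b⁻¹ = x * (b * w⁻¹ * b⁻¹) := by
        rw [show b * x = x * b * w⁻¹ by rw [hab]; group]
        group
      rw [hba]
      exact mul_mem ha (hle ((mem_normalizer_iff.1 hb _).1 (inv_mem hw)))
    · exact hle ((mem_normalizer_iff.1 hb x).1 (subset_closure hx))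
  · rcases hx with rfl | hx
    · rw [show b⁻¹ * x * b = x * w by rw [mul_assoc, hab]; group]
      exact mul_mem ha (hle hw)
    · exact hle ((mem_normalizer_iff''.1 hb x).1 (subset_closure hx))

theorem mem_normalizer_closure_range {n : ℕ} (g : Fin n → Γ) (b : Γ)
    (h : ∀ j, ∃ w ∈ closure (g '' Ioi j), g j * b = b * g j * w) :
    b ∈ normalizer (closure (range g) : Set Γ) := by
  induction n with
  | zero =>
    rw [range_eq_empty, Subgroup.closure_empty, normalizer_eq_top]
    trivial
  | succ n ih =>
    obtain ⟨w, hw, hgb⟩ := h 0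
    rw [Fin.range_fin_succ]
    refine mem_normalizer_closure_insert (ih _ fun j => ?_)
      (closure_mono (image_Ioi_zero_subset_range_tail g) hw) hgb
    exact image_Ioi_succ_eq_tail g j ▸ h j.succ

theorem exists_prodPow_eq_of_mem_closure {n : ℕ} (g : Fin n → Γ)
    (hg : ∀ i j, i < j → ∃ w ∈ closure (g '' Ioi j), g j * g i = g i * g j * w)
    {x : Γ} (hx : x ∈ closure (range g)) : ∃ e, prodPow n g e = x := by
  induction n generalizing x with
  | zero =>
    rw [range_eq_empty, Subgroup.closure_empty, mem_bot] at hx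
    exact ⟨0, by simp [prodPow, hx]⟩
  | succ n ih =>
    have htail : ∀ i j, i < j →
        ∃ w ∈ closure (Fin.tail g '' Ioi j), Fin.tail g j * Fin.tail g i =
          Fin.tail g i * Fin.tail g j * w := fun i j hij =>
      image_Ioi_succ_eq_tail g j ▸ hg _ _ (Fin.succ_lt_succ_iff.2 hij)
    have hnorm : zpowers (g 0) ≤ normalizer (closure (range (Fin.tail g)) : Set Γ) :=
      zpowers_le.2 <| mem_normalizer_closure_range _ _ fun j =>
        image_Ioi_succ_eq_tail g j ▸ hg 0 j.succ (Fin.succ_pos j)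
    rw [Fin.range_fin_succ, insert_eq, Subgroup.closure_union, ← zpowers_eq_closure,
      ← SetLike.mem_coe, coe_mul_of_left_le_normalizer_right _ _ hnorm] at hx
    obtain ⟨_, ⟨k, rfl⟩, y, hy, rfl⟩ := hx
    obtain ⟨e, rfl⟩ := ih _ htail hy
    exact ⟨Fin.cons k e, by simp [prodPow_succ]⟩

end Collection

variable {n : ℕ} {t : Fin n → Fin n → Fin n → ℤ}

lemma a_mul_a_of_lt {i j : Fin n} (hij : i < j) :
    a n t j * a n t i =
      a n t i * a n t j * prodPow n (a n t) (fun k => if j < k then t i j k else 0) := by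
  have h := PresentedGroup.one_of_mem (rels := rels n t) ⟨i, j, hij, rfl⟩
  rw [map_mul, map_inv, map_mul, map_mul, map_prodPow_s13, inv_mul_eq_one] at h
  exact h.symm

def G.lift {Γ : Type*} [Group Γ] (g : Fin n → Γ)
    (hg : ∀ i j, i < j →
      g j * g i = g i * g j * prodPow n g (fun k => if j < k then t i j k else 0)) :
    G n t →* Γ :=
  PresentedGroup.toGroup (f := g) <| by
    rintro _ ⟨i, j, hij, rfl⟩
    simp only [map_mul, map_inv, map_prodPow_s13, Function.comp_def, FreeGroup.lift_apply_of]
    rw [← hg i j hij, inv_mul_cancel]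

lemma G.lift_a {Γ : Type*} [Group Γ] (g : Fin n → Γ) (hg) (i : Fin n) :
    G.lift (t := t) g hg (a n t i) = g i :=
  PresentedGroup.toGroup.of _

theorem N_surjective : Function.Surjective (N n t) := fun x =>
  exists_prodPow_eq_of_mem_closure (a n t)
    (fun _ _ hij =>
      ⟨_, prodPow_mem_closure _ fun _ hk => (ite_ne_right_iff.1 hk).1, a_mul_a_of_lt hij⟩)
    (by rw [show range (a n t) = range PresentedGroup.of from rfl,
      PresentedGroup.closure_range_of]; trivial)

/-- If `G(t)` is consistent, then so is `G(t_u)`, where `t_u` is the subfamily of `t` of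
entries with all indices different from `1`: the normal form map `N_{t_u} : ℤ^{n-1} → G(t_u)`
is also bijective. -/
theorem consistent_tu (m : ℕ) (t : Fin (m + 1) → Fin (m + 1) → Fin (m + 1) → ℤ)
    (hN : Function.Bijective (N (m + 1) t))
    (tu : Fin m → Fin m → Fin m → ℤ)
    (htu : ∀ i j k : Fin m, tu i j k = t i.succ j.succ k.succ) :
    Function.Bijective (N m tu) := by
  set g : Fin m → G (m + 1) t := Fin.tail (a (m + 1) t)
  have hg : ∀ i j, i < j →
      g j * g i = g i * g j * prodPow m g (fun k => if j < k then tu i j k else 0) := by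
    intro i j hij
    simp only [g, Fin.tail]
    rw [a_mul_a_of_lt (Fin.succ_lt_succ_iff.2 hij), prodPow_succ, if_neg (Fin.not_lt_zero _),
      zpow_zero, one_mul]
    congr 2
    funext k
    simp [Fin.tail, htu]
  have hφ : ∀ x, G.lift g hg (N m tu x) = N (m + 1) t (Fin.cons 0 x) := by
    intro x
    simp [N, map_prodPow_s13, prodPow_succ, Function.comp_def, G.lift_a, g]
  refine ⟨fun x y hxy => ?_, N_surjective⟩
  exact Fin.cons_right_injective 0 (hN.1 (by rw [← hφ, ← hφ, hxy]))

end HallPoly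
end
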